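/- Minorization inequality for the smoothed likelihood: Let (f_1,…,f_M) ∈ C with Σ_{k=1}^M α_{i,k} N_{h_k} f_k(X_i) > 0 for every i, and define w_{i,j} = α_{i,j} N_{h_j} f_j(X_i) / Σ_{k=1}^M α_{i,k} N_{h_k} f_k(X_i). Then for every (g_1,…,g_M) ∈ C, l_n(g_1,…,g_M) − l_n(f_1,…,f_M) ≥ Σ_{i=1}^n Σ_{j=1}^M w_{i,j} (log N_{h_j} g_j(X_i) − log N_{h_j} f_j(X_i)). -/

import Mathlib

open MeasureTheory Real Set Filter Classical

/-- Scaled kernel `K_h(x) = (1/h) K(x/h)`. -/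
noncomputable def kh (K : ℝ → ℝ) (h x : ℝ) : ℝ := (1 / h) * K (x / h)

/-- The nonlinear smoothing operator
`N_h f(x) = exp (∫ K_h(u - x) log f(u) du)`, with the conventions
`0 · log 0 = 0`, `log 0 = −∞`, `exp (−∞) = 0`: if `f` vanishes on a
non-null part of the (translated) kernel support, or the defining integral
does not exist, the value is `0`. -/
noncomputable def nsmooth (K : ℝ → ℝ) (h : ℝ) (f : ℝ → ℝ) (x : ℝ) : ℝ :=
  if (volume {u : ℝ | kh K h (u - x) ≠ 0 ∧ f u = 0} = 0 ∧
      Integrable (fun u : ℝ => kh K h (u - x) * Real.log (f u)))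
  then Real.exp (∫ u : ℝ, kh K h (u - x) * Real.log (f u))
  else 0

/-- `f` is a probability density function on `ℝ` (w.r.t. Lebesgue measure). -/
def IsPdf (f : ℝ → ℝ) : Prop :=
  Measurable f ∧ (∀ x, 0 ≤ f x) ∧ ∫ x : ℝ, f x = 1

/-- Extended-real logarithm with the convention `log y = −∞` for `y ≤ 0`. -/
noncomputable def logE (y : ℝ) : EReal := if y ≤ 0 then ⊥ else ((Real.log y : ℝ) : EReal)

/-- The smoothed log-likelihood
`l_n(f_1,…,f_M) = Σ_i log (Σ_j α_{i,j} N_{h_j} f_j (X_i))`, valued in `[−∞,∞)`. -/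
noncomputable def smoothedLL (K : ℝ → ℝ) (n M : ℕ) (X : Fin n → ℝ)
    (α : Fin n → Fin M → ℝ) (h : Fin M → ℝ) (f : Fin M → ℝ → ℝ) : EReal :=
  ∑ i : Fin n, logE (∑ j : Fin M, α i j * nsmooth K (h j) (f j) (X i))

/-- The weights `w_{i,j} = α_{i,j} N_{h_j} f_j(X_i) / Σ_k α_{i,k} N_{h_k} f_k(X_i)`. -/
noncomputable def mmWeight (K : ℝ → ℝ) (n M : ℕ) (X : Fin n → ℝ)
    (α : Fin n → Fin M → ℝ) (h : Fin M → ℝ) (f : Fin M → ℝ → ℝ)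
    (i : Fin n) (j : Fin M) : ℝ :=
  α i j * nsmooth K (h j) (f j) (X i) /
    ∑ k : Fin M, α i k * nsmooth K (h k) (f k) (X i)

/-- The majorization–minimization update
`f_j^G(x) = Σ_i w_{i,j} K_{h_j}(x − X_i) / Σ_i w_{i,j}`. -/
noncomputable def mmUpdate (K : ℝ → ℝ) (n M : ℕ) (X : Fin n → ℝ)
    (α : Fin n → Fin M → ℝ) (h : Fin M → ℝ) (f : Fin M → ℝ → ℝ)
    (j : Fin M) (x : ℝ) : ℝ :=
  (∑ i : Fin n, mmWeight K n M X α h f i j * kh K (h j) (x - X i)) /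
    ∑ i : Fin n, mmWeight K n M X α h f i j

/-! For a single observation put `a_j = α_j N f_j(X_i)`, `b_j = α_j N g_j(X_i)` and `w_j = a_j / Σ a`.
Concavity of `log` in the form of the log-sum inequality, `Σ_j a_j log (b_j / a_j) ≤ (Σ a) log (Σ b / Σ a)`,
which follows termwise from `log x ≤ x - 1`, gives `log Σ a + Σ_j w_j (log b_j - log a_j) ≤ log Σ b`;
the factors `α_j` cancel inside `log b_j - log a_j`. Summing over the observations gives the theorem.
If some `w_j > 0` meets `N g_j(X_i) = 0`, the left-hand side is `−∞`. -/

lemma mul_log_sub_log_le {a b c : ℝ} (ha : 0 ≤ a) (hb : 0 ≤ b) (hab : a ≠ 0 → 0 < b)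
    (hc : 0 < c) : a * (Real.log b - Real.log a) ≤ a * Real.log c + (b / c - a) := by
  rcases ha.eq_or_lt with rfl | ha
  · simpa using div_nonneg hb hc.le
  have hb := hab ha.ne'
  have key := Real.log_le_sub_one_of_pos (show 0 < b / (a * c) by positivity)
  rw [Real.log_div hb.ne' (by positivity), Real.log_mul ha.ne' hc.ne'] at key
  have := mul_le_mul_of_nonneg_left key ha.le
  rw [mul_sub a _ 1, mul_one, mul_div_assoc', mul_div_mul_left _ _ ha.ne'] at this
  linarith

lemma sum_mul_log_sub_log_le {ι : Type*} (s : Finset ι) (a b : ι → ℝ)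
    (ha : ∀ j ∈ s, 0 ≤ a j) (hb : ∀ j ∈ s, 0 ≤ b j) (hab : ∀ j ∈ s, a j ≠ 0 → 0 < b j) :
    ∑ j ∈ s, a j * (Real.log (b j) - Real.log (a j)) ≤
      (∑ j ∈ s, a j) * (Real.log (∑ j ∈ s, b j) - Real.log (∑ j ∈ s, a j)) := by
  rcases (Finset.sum_nonneg ha).eq_or_lt with hS | hS
  · have ha0 := (Finset.sum_eq_zero_iff_of_nonneg ha).1 hS.symm
    rw [← hS, zero_mul]
    exact (Finset.sum_eq_zero fun j hj => by rw [ha0 j hj, zero_mul]).le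
  set S := ∑ j ∈ s, a j
  set T := ∑ j ∈ s, b j
  obtain ⟨j, hj, haj⟩ := Finset.exists_ne_zero_of_sum_ne_zero hS.ne'
  have hT : 0 < T := (hab j hj haj).trans_le (Finset.single_le_sum hb hj)
  calc ∑ j ∈ s, a j * (Real.log (b j) - Real.log (a j))
      ≤ ∑ j ∈ s, (a j * Real.log (T / S) + (b j / (T / S) - a j)) :=
        Finset.sum_le_sum fun j hj =>
          mul_log_sub_log_le (ha j hj) (hb j hj) (hab j hj) (by positivity)
    _ = S * (Real.log T - Real.log S) := by
        rw [Finset.sum_add_distrib, Finset.sum_sub_distrib, ← Finset.sum_mul, ← Finset.sum_div,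
          Real.log_div hT.ne' hS.ne']
        field_simp
        ring

lemma EReal.coe_finset_sum {ι : Type*} (s : Finset ι) (f : ι → ℝ) :
    ((∑ i ∈ s, f i : ℝ) : EReal) = ∑ i ∈ s, (f i : EReal) :=
  map_sum (⟨⟨Real.toEReal, EReal.coe_zero⟩, EReal.coe_add⟩ : ℝ →+ EReal) f s

lemma EReal.sum_eq_bot {ι : Type*} {s : Finset ι} {f : ι → EReal} {i : ι}
    (hi : i ∈ s) (hfi : f i = ⊥) : ∑ j ∈ s, f j = ⊥ := by
  rw [← Finset.add_sum_erase _ _ hi, hfi, EReal.bot_add]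

lemma logE_of_pos {y : ℝ} (hy : 0 < y) : logE y = (Real.log y : EReal) :=
  if_neg hy.not_ge

lemma logE_of_nonpos {y : ℝ} (hy : y ≤ 0) : logE y = ⊥ :=
  if_pos hy

lemma nsmooth_nonneg (K : ℝ → ℝ) (h : ℝ) (f : ℝ → ℝ) (x : ℝ) : 0 ≤ nsmooth K h f x := by
  unfold nsmooth
  split_ifs
  exacts [(Real.exp_pos _).le, le_rfl]

section Mixture

variable {ι : Type*} [Fintype ι] (α u v : ι → ℝ)

lemma log_mixture_minorization (hα : ∀ j, 0 ≤ α j) (hu : ∀ j, 0 ≤ u j) (hv : ∀ j, 0 ≤ v j)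
    (huv : ∀ j, α j * u j ≠ 0 → 0 < v j) (hpos : 0 < ∑ j, α j * u j) :
    Real.log (∑ j, α j * u j) +
        ∑ j, α j * u j / (∑ k, α k * u k) * (Real.log (v j) - Real.log (u j)) ≤
      Real.log (∑ j, α j * v j) := by
  have hlogsum := sum_mul_log_sub_log_le Finset.univ (fun j => α j * u j) (fun j => α j * v j)
    (fun j _ => mul_nonneg (hα j) (hu j)) (fun j _ => mul_nonneg (hα j) (hv j))
    fun j _ hj => mul_pos ((hα j).lt_of_ne (left_ne_zero_of_mul hj).symm) (huv j hj)
  have hlog_ratio : ∀ j, α j * u j * (Real.log (α j * v j) - Real.log (α j * u j)) =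
      α j * u j * (Real.log (v j) - Real.log (u j)) := by
    intro j
    by_cases hj : α j * u j = 0
    · rw [hj, zero_mul, zero_mul]
    rw [Real.log_mul (left_ne_zero_of_mul hj) (huv j hj).ne',
      Real.log_mul (left_ne_zero_of_mul hj) (right_ne_zero_of_mul hj)]
    ring
  simp only [hlog_ratio] at hlogsum
  simp only [div_mul_eq_mul_div, ← Finset.sum_div]
  linarith [(div_le_iff₀' hpos).2 hlogsum]

lemma logE_mixture_minorization (hα : ∀ j, 0 ≤ α j) (hu : ∀ j, 0 ≤ u j) (hv : ∀ j, 0 ≤ v j)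
    (hpos : 0 < ∑ j, α j * u j) :
    logE (∑ j, α j * u j) +
        ∑ j, ((α j * u j / ∑ k, α k * u k : ℝ) : EReal) * (logE (v j) - logE (u j)) ≤
      logE (∑ j, α j * v j) := by
  by_cases hdeg : ∃ j, α j * u j ≠ 0 ∧ v j ≤ 0
  · obtain ⟨j, hj, hvj⟩ := hdeg
    have hterm : ((α j * u j / ∑ k, α k * u k : ℝ) : EReal) * (logE (v j) - logE (u j)) = ⊥ := by
      rw [logE_of_nonpos hvj, logE_of_pos ((hu j).lt_of_ne (right_ne_zero_of_mul hj).symm),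
        EReal.bot_sub]
      exact EReal.coe_mul_bot_of_pos
        (div_pos ((mul_nonneg (hα j) (hu j)).lt_of_ne hj.symm) hpos)
    rw [EReal.sum_eq_bot (Finset.mem_univ j) hterm, EReal.add_bot]
    exact bot_le
  push Not at hdeg
  have hterm : ∀ j, ((α j * u j / ∑ k, α k * u k : ℝ) : EReal) * (logE (v j) - logE (u j)) =
      ((α j * u j / (∑ k, α k * u k) * (Real.log (v j) - Real.log (u j)) : ℝ) : EReal) := by
    intro j
    by_cases hj : α j * u j = 0
    · simp [hj]
    rw [logE_of_pos (hdeg j hj), logE_of_pos ((hu j).lt_of_ne (right_ne_zero_of_mul hj).symm),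
      ← EReal.coe_sub, ← EReal.coe_mul]
  obtain ⟨j, -, hj⟩ := Finset.exists_ne_zero_of_sum_ne_zero hpos.ne'
  have hTpos : 0 < ∑ j, α j * v j :=
    (mul_pos ((hα j).lt_of_ne (left_ne_zero_of_mul hj).symm) (hdeg j hj)).trans_le
      (Finset.single_le_sum (fun k _ => mul_nonneg (hα k) (hv k)) (Finset.mem_univ j))
  rw [Finset.sum_congr rfl fun j _ => hterm j, ← EReal.coe_finset_sum, logE_of_pos hpos,
    logE_of_pos hTpos, ← EReal.coe_add, EReal.coe_le_coe_iff]
  exact log_mixture_minorization α u v hα hu hv hdeg hpos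

end Mixture

theorem smoothedLL_minorization_general
    (K : ℝ → ℝ)
    (n M : ℕ) (X : Fin n → ℝ) (α : Fin n → Fin M → ℝ)
    (hα : ∀ i j, 0 ≤ α i j)
    (h : Fin M → ℝ)
    (f : Fin M → ℝ → ℝ)
    (hpos : ∀ i, 0 < ∑ k : Fin M, α i k * nsmooth K (h k) (f k) (X i))
    (g : Fin M → ℝ → ℝ) :
    smoothedLL K n M X α h f +
        ∑ i : Fin n, ∑ j : Fin M,
          ((mmWeight K n M X α h f i j : ℝ) : EReal) *
            (logE (nsmooth K (h j) (g j) (X i)) - logE (nsmooth K (h j) (f j) (X i)))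
      ≤ smoothedLL K n M X α h g := by
  rw [smoothedLL, smoothedLL, ← Finset.sum_add_distrib]
  exact Finset.sum_le_sum fun i _ =>
    logE_mixture_minorization (α i) (fun j => nsmooth K (h j) (f j) (X i))
      (fun j => nsmooth K (h j) (g j) (X i)) (hα i) (fun _ => nsmooth_nonneg ..)
      (fun _ => nsmooth_nonneg ..) (hpos i)

/-- **Minorization inequality for the smoothed likelihood.**
With `w_{i,j} = α_{i,j} N_{h_j} f_j(X_i) / Σ_k α_{i,k} N_{h_k} f_k(X_i)`,
for every `(g_1,…,g_M) ∈ C`,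
`l_n(g) − l_n(f) ≥ Σ_i Σ_j w_{i,j} (log N_{h_j} g_j(X_i) − log N_{h_j} f_j(X_i))`
(with values in `[−∞,∞)`). -/
theorem smoothedLL_minorization
    (K : ℝ → ℝ) (L : ℝ) (hL : 0 < L) (hKmeas : Measurable K)
    (hKnonneg : ∀ t, 0 ≤ K t) (hKsupp : ∀ t, t ∉ Set.Icc (-L) L → K t = 0)
    (hKint : ∫ t : ℝ, K t = 1)
    (n M : ℕ) (X : Fin n → ℝ) (α : Fin n → Fin M → ℝ)
    (hα : ∀ i j, 0 ≤ α i j) (hαsum : ∀ i, ∑ j : Fin M, α i j = 1)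
    (h : Fin M → ℝ) (hh : ∀ j, 0 < h j)
    (f : Fin M → ℝ → ℝ) (hf : ∀ j, IsPdf (f j))
    (hpos : ∀ i, 0 < ∑ k : Fin M, α i k * nsmooth K (h k) (f k) (X i))
    (g : Fin M → ℝ → ℝ) (hg : ∀ j, IsPdf (g j)) :
    smoothedLL K n M X α h f +
        ∑ i : Fin n, ∑ j : Fin M,
          ((mmWeight K n M X α h f i j : ℝ) : EReal) *
            (logE (nsmooth K (h j) (g j) (X i)) - logE (nsmooth K (h j) (f j) (X i)))
      ≤ smoothedLL K n M X α h g :=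
  smoothedLL_minorization_general K n M X α hα h f hpos g
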